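/- Let A, B be d×d real matrices with A almost-positively stable and A + B positively stable. Let P be the projection onto ker A, α = min{Re λ : λ eigenvalue of A+B}, β = min{Re λ : λ ≠ 0 eigenvalue of A} (β = 0 if A = 0). Then there exist constants c₁, c₂ > 0 and naturals n₁, n₂ such that for all x ∈ ℝ^d and t ≥ 0, |(exp(-tA) - exp(-t(A+B)))x - Px| ≤ c₂(1+t^{n₂}) e^{-βt} |(I-P)x| + c₁(1+t^{n₁}) e^{-αt} |x|. -/

import Mathlib

/-!
Since `A P = P A = 0` and `P² = P`, the matrices `A` and `β P` commute and
`exp (-t(A + βP)) (I - P) = exp (-tA) - P`. Shifting by `βP` moves the zero eigenvalue of `A` to `β`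
and keeps the others, so every eigenvalue of `A + βP` has real part at least `β`. Hence
`ξ(t)x - Px = exp (-t(A + βP)) (x - Px) - exp (-t(A + B)) x`, and both terms are controlled by the
bound `‖exp (-tM)‖ ≤ C (1 + t^d) e^{-αt}` for any `M` whose eigenvalues have real part `≥ α`.

That bound comes from Putzer's algorithm: if `∏_{i<n} (λᵢ - M) = 0` then
`exp (-tM) = ∑_{k<n} r_k(t) ∏_{i<k} (λᵢ - M)` with scalar coefficients solving a triangular linear
system of ODEs, whence `|r_k(t)| ≤ t^k / k! · e^{-αt}`. Cayley–Hamilton supplies the `λᵢ`.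
-/

open Matrix NormedSpace Polynomial Finset
open scoped Nat

attribute [local instance] Matrix.linftyOpNormedRing Matrix.linftyOpNormedAlgebra

lemma List.prod_range_length_getD {α M : Type*} [CommMonoid M] (f : α → M) (d : α)
    (l : List α) : ∏ i ∈ Finset.range l.length, f (l.getD i d) = (l.map f).prod := by
  rw [Finset.prod_range, ← List.prod_ofFn, ← List.ofFn_getElem_eq_map]
  simp

lemma pow_le_one_add_pow {t : ℝ} (ht : 0 ≤ t) {k n : ℕ} (hkn : k ≤ n) : t ^ k ≤ 1 + t ^ n := by
  rcases le_total t 1 with h | h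
  · linarith [pow_le_one₀ ht h (n := k), pow_nonneg ht n]
  · linarith [pow_le_pow_right₀ h hkn]

section BanachAlgebra

variable {𝔸 : Type*} [NormedRing 𝔸] [NormedAlgebra ℚ 𝔸] [CompleteSpace 𝔸]

lemma exp_mul_of_mul_eq_zero {a b : 𝔸} (h : a * b = 0) : exp a * b = b := by
  have hpow : ∀ k, a ^ (k + 1) * b = 0 := fun k => by rw [pow_succ, mul_assoc, h, mul_zero]
  rw [exp_eq_tsum_rat, ← (expSeries_summable' (𝕂 := ℚ) a).tsum_mul_right,
    tsum_eq_single 0 fun k hk => by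
      obtain ⟨k, rfl⟩ := Nat.exists_eq_succ_of_ne_zero hk
      rw [smul_mul_assoc, hpow, smul_zero]]
  simp

lemma exp_add_smul_mul_one_sub {R : Type*} [CommSemiring R] [Algebra R 𝔸] {a p : 𝔸}
    (hp : IsIdempotentElem p) (hap : a * p = 0) (hpa : p * a = 0) (s : R) :
    exp (a + s • p) * (1 - p) = exp a - p := by
  have hcomm : Commute a (s • p) := by
    rw [Commute, SemiconjBy, mul_smul_comm, smul_mul_assoc, hap, hpa]
  have hfix : exp (s • p) * (1 - p) = 1 - p :=
    exp_mul_of_mul_eq_zero (by rw [smul_mul_assoc, mul_sub, mul_one, hp.eq, sub_self, smul_zero])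
  rw [exp_add_of_commute hcomm, mul_assoc, hfix, mul_sub, mul_one, exp_mul_of_mul_eq_zero hap]

end BanachAlgebra

section ComplexBanachAlgebra

variable {𝔸 : Type*} [NormedRing 𝔸] [NormedAlgebra ℂ 𝔸] [CompleteSpace 𝔸]

lemma hasDerivAt_exp_ofReal_smul (a : 𝔸) (t : ℝ) :
    HasDerivAt (fun u : ℝ => exp ((u : ℂ) • a)) (exp ((t : ℂ) • a) * a) t := by
  have := HasDerivAt.scomp t (hasDerivAt_exp_smul_const a (t : ℂ)) Complex.ofRealCLM.hasDerivAt
  rwa [Complex.ofRealCLM_apply, Complex.ofReal_one, one_smul] at this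

lemma exp_neg_mul_exp (x : 𝔸) : exp (-x) * exp x = 1 := by
  rw [← exp_add_of_commute_of_mem_ball (𝕂 := ℂ) (Commute.refl x).neg_left, neg_add_cancel,
    exp_zero] <;> simp [expSeries_radius_eq_top]

end ComplexBanachAlgebra

lemma hasDerivAt_cexp_mul_ofReal (c : ℂ) (t : ℝ) :
    HasDerivAt (fun s : ℝ => Complex.exp (c * s)) (c * Complex.exp (c * t)) t := by
  simpa [mul_comm] using ((hasDerivAt_id (t : ℂ)).const_mul c).cexp.comp_ofReal

/-- Putzer's coefficients: `r₀' = -λ₀ r₀`, `r₀(0) = 1`, and `r_{k+1}' = -λ_{k+1} r_{k+1} + r_k`,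
`r_{k+1}(0) = 0`, solved by variation of constants. -/
noncomputable def putzerCoeff (lam : ℕ → ℂ) : ℕ → ℝ → ℂ
  | 0 => fun t => Complex.exp (-lam 0 * t)
  | k + 1 => fun t => Complex.exp (-lam (k + 1) * t) *
      ∫ s in (0 : ℝ)..t, Complex.exp (lam (k + 1) * s) * putzerCoeff lam k s

section putzerCoeff

variable (lam : ℕ → ℂ)

@[simp] lemma putzerCoeff_zero_zero : putzerCoeff lam 0 0 = 1 := by simp [putzerCoeff]

@[simp] lemma putzerCoeff_succ_zero (k : ℕ) : putzerCoeff lam (k + 1) 0 = 0 := by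
  simp [putzerCoeff]

lemma continuous_putzerCoeff (k : ℕ) : Continuous (putzerCoeff lam k) := by
  induction k with
  | zero => simp only [putzerCoeff]; fun_prop
  | succ k ih =>
    simp only [putzerCoeff]
    exact (by fun_prop : Continuous fun t : ℝ => Complex.exp (-lam (k + 1) * t)).mul
      (intervalIntegral.continuous_primitive (fun _ _ => (by fun_prop : Continuous
        fun s : ℝ => Complex.exp (lam (k + 1) * s) * putzerCoeff lam k s).intervalIntegrable _ _) 0)

lemma hasDerivAt_putzerCoeff_zero (t : ℝ) :
    HasDerivAt (putzerCoeff lam 0) (-lam 0 * putzerCoeff lam 0 t) t :=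
  hasDerivAt_cexp_mul_ofReal _ t

lemma hasDerivAt_putzerCoeff_succ (k : ℕ) (t : ℝ) :
    HasDerivAt (putzerCoeff lam (k + 1))
      (-lam (k + 1) * putzerCoeff lam (k + 1) t + putzerCoeff lam k t) t := by
  have hint : Continuous fun s : ℝ => Complex.exp (lam (k + 1) * s) * putzerCoeff lam k s := by
    have := continuous_putzerCoeff lam k
    fun_prop
  refine ((hasDerivAt_cexp_mul_ofReal (-lam (k + 1)) t).mul
    (hint.integral_hasStrictDerivAt 0 t).hasDerivAt).congr_deriv ?_
  rw [← mul_assoc (Complex.exp _), ← Complex.exp_add,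
    show -lam (k + 1) * t + lam (k + 1) * t = 0 by ring, Complex.exp_zero, putzerCoeff]
  ring

lemma norm_putzerCoeff_succ_le {α : ℝ} {k : ℕ}
    (hk : ∀ s, 0 ≤ s → ‖putzerCoeff lam k s‖ ≤ s ^ k / k ! * Real.exp (-(α * s)))
    (hα : α ≤ (lam (k + 1)).re) {t : ℝ} (ht : 0 ≤ t) :
    ‖putzerCoeff lam (k + 1) t‖ ≤ t ^ (k + 1) / (k + 1)! * Real.exp (-(α * t)) := by
  set c := lam (k + 1)
  have hintegrand : ∀ s ∈ Set.Ioc 0 t, ‖Complex.exp (c * s) * putzerCoeff lam k s‖ ≤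
      Real.exp ((c.re - α) * t) * (s ^ k / k !) := by
    rintro s ⟨hs, hst⟩
    rw [norm_mul, Complex.norm_exp, Complex.re_mul_ofReal]
    calc Real.exp (c.re * s) * ‖putzerCoeff lam k s‖
        ≤ Real.exp (c.re * s) * (s ^ k / k ! * Real.exp (-(α * s))) := by gcongr; exact hk s hs.le
      _ = Real.exp ((c.re - α) * s) * (s ^ k / k !) := by
          rw [sub_mul, Real.exp_sub, Real.exp_neg]; ring
      _ ≤ Real.exp ((c.re - α) * t) * (s ^ k / k !) := by gcongr
  have hintegral := intervalIntegral.norm_integral_le_of_norm_le (μ := MeasureTheory.volume) ht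
    (Filter.Eventually.of_forall hintegrand) ((by fun_prop : Continuous fun s : ℝ =>
      Real.exp ((c.re - α) * t) * (s ^ k / k !)).intervalIntegrable _ _)
  calc ‖putzerCoeff lam (k + 1) t‖
      = Real.exp (-(c.re * t)) *
          ‖∫ s in (0 : ℝ)..t, Complex.exp (c * s) * putzerCoeff lam k s‖ := by
        rw [putzerCoeff, norm_mul, Complex.norm_exp, Complex.re_mul_ofReal, Complex.neg_re,
          neg_mul]
    _ ≤ Real.exp (-(c.re * t)) *
          ∫ s in (0 : ℝ)..t, Real.exp ((c.re - α) * t) * (s ^ k / k !) := by gcongr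
    _ = t ^ (k + 1) / (k + 1)! * Real.exp (-(α * t)) := by
        rw [intervalIntegral.integral_const_mul, intervalIntegral.integral_div, integral_pow,
          ← mul_assoc, ← Real.exp_add, Nat.factorial_succ]
        push_cast
        field_simp
        ring_nf

lemma norm_putzerCoeff_le {α : ℝ} {k : ℕ} (hlam : ∀ j ≤ k, α ≤ (lam j).re) {t : ℝ} (ht : 0 ≤ t) :
    ‖putzerCoeff lam k t‖ ≤ t ^ k / k ! * Real.exp (-(α * t)) := by
  induction k generalizing t with
  | zero =>
    simpa [putzerCoeff, Complex.norm_exp] using mul_le_mul_of_nonneg_right (hlam 0 le_rfl) ht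
  | succ k ih =>
    exact norm_putzerCoeff_succ_le lam (fun s hs => ih (fun j hj => hlam j (hj.trans k.le_succ)) hs)
      (hlam (k + 1) le_rfl) ht

end putzerCoeff

section Putzer

variable {𝔸 : Type*} [NormedRing 𝔸] [NormedAlgebra ℂ 𝔸] (a : 𝔸) (lam : ℕ → ℂ)

noncomputable def putzerProd : ℕ → 𝔸
  | 0 => 1
  | k + 1 => (algebraMap ℂ 𝔸 (lam k) - a) * putzerProd k

lemma putzerProd_eq_aeval (k : ℕ) :
    putzerProd a lam k = aeval a (∏ i ∈ range k, (C (lam i) - X)) := by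
  induction k with
  | zero => simp [putzerProd]
  | succ k ih => rw [putzerProd, ih, prod_range_succ_comm, map_mul, map_sub, aeval_C, aeval_X]

lemma neg_mul_putzerProd (k : ℕ) :
    -a * putzerProd a lam k = putzerProd a lam (k + 1) - lam k • putzerProd a lam k := by
  rw [putzerProd, sub_mul, Algebra.smul_def, neg_mul]
  abel

noncomputable def putzerSum (n : ℕ) : ℝ → 𝔸 :=
  fun t => ∑ k ∈ range n, putzerCoeff lam k t • putzerProd a lam k

lemma putzerSum_succ (n : ℕ) : putzerSum a lam (n + 1) =
    fun t => putzerSum a lam n t + putzerCoeff lam n t • putzerProd a lam n :=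
  funext fun _ => sum_range_succ _ _

lemma putzerSum_succ_zero (n : ℕ) : putzerSum a lam (n + 1) 0 = 1 := by
  induction n with
  | zero => simp [putzerSum, putzerProd]
  | succ n ih =>
    simp only [putzerSum_succ a lam (n + 1), ih, putzerCoeff_succ_zero, zero_smul, add_zero]

lemma hasDerivAt_putzerSum_succ (n : ℕ) (t : ℝ) :
    HasDerivAt (putzerSum a lam (n + 1))
      (-a * putzerSum a lam (n + 1) t - putzerCoeff lam n t • putzerProd a lam (n + 1)) t := by
  induction n with
  | zero =>
    unfold putzerSum
    simp only [zero_add, sum_range_one]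
    refine ((hasDerivAt_putzerCoeff_zero lam t).smul_const (putzerProd a lam 0)).congr_deriv ?_
    rw [mul_smul_comm, neg_mul_putzerProd]
    module
  | succ n ih =>
    rw [putzerSum_succ a lam (n + 1)]
    refine (ih.add ((hasDerivAt_putzerCoeff_succ lam n t).smul_const _)).congr_deriv ?_
    rw [mul_add, mul_smul_comm, neg_mul_putzerProd]
    module

lemma norm_putzerSum_le {n : ℕ} {α : ℝ} (hlam : ∀ k < n, α ≤ (lam k).re) {t : ℝ} (ht : 0 ≤ t) :
    ‖putzerSum a lam n t‖ ≤
      (∑ k ∈ range n, ‖putzerProd a lam k‖) * (1 + t ^ n) * Real.exp (-(α * t)) := by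
  have hcoeff : ∀ k ∈ range n, ‖putzerCoeff lam k t‖ ≤ (1 + t ^ n) * Real.exp (-(α * t)) := by
    intro k hk
    have hkn := mem_range.1 hk
    calc ‖putzerCoeff lam k t‖ ≤ t ^ k / k ! * Real.exp (-(α * t)) :=
          norm_putzerCoeff_le lam (fun j hj => hlam j (hj.trans_lt hkn)) ht
      _ ≤ t ^ k * Real.exp (-(α * t)) := by
          gcongr; exact div_le_self (by positivity) (by exact_mod_cast k.factorial_pos)
      _ ≤ (1 + t ^ n) * Real.exp (-(α * t)) := by gcongr; exact pow_le_one_add_pow ht hkn.le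
  calc ‖putzerSum a lam n t‖ ≤ ∑ k ∈ range n, ‖putzerCoeff lam k t‖ * ‖putzerProd a lam k‖ :=
        (norm_sum_le _ _).trans (sum_le_sum fun k _ => norm_smul_le _ _)
    _ ≤ ∑ k ∈ range n, (1 + t ^ n) * Real.exp (-(α * t)) * ‖putzerProd a lam k‖ :=
        sum_le_sum fun k hk => by gcongr; exact hcoeff k hk
    _ = _ := by rw [← mul_sum]; ring

variable [CompleteSpace 𝔸]

lemma exp_neg_smul_eq_putzerSum {n : ℕ} (h : putzerProd a lam (n + 1) = 0) (t : ℝ) :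
    exp (-((t : ℂ) • a)) = putzerSum a lam (n + 1) t := by
  let S := putzerSum a lam (n + 1)
  have hderiv (u : ℝ) : HasDerivAt (fun u : ℝ => exp ((u : ℂ) • a) * S u) 0 u := by
    have := (hasDerivAt_exp_ofReal_smul a u).mul (hasDerivAt_putzerSum_succ a lam n u)
    rwa [h, smul_zero, sub_zero, mul_assoc, neg_mul, mul_neg, add_neg_cancel] at this
  have hconst : exp ((t : ℂ) • a) * S t = 1 := by
    rw [is_const_of_deriv_eq_zero (fun u => (hderiv u).differentiableAt)
      (fun u => (hderiv u).deriv) t 0, Complex.ofReal_zero, zero_smul, exp_zero, one_mul]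
    exact putzerSum_succ_zero a lam n
  rw [← mul_one (exp _), ← hconst, ← mul_assoc, exp_neg_mul_exp, one_mul]

variable {a lam}

lemma norm_exp_neg_smul_le_of_putzerProd_eq_zero {n : ℕ}
    (h : putzerProd a lam n = 0) {α : ℝ} (hlam : ∀ k < n, α ≤ (lam k).re) :
    ∃ C > 0, ∀ t : ℝ, 0 ≤ t →
      ‖exp (-((t : ℂ) • a))‖ ≤ C * (1 + t ^ n) * Real.exp (-(α * t)) := by
  cases n with
  | zero =>
    have : Subsingleton 𝔸 := subsingleton_of_zero_eq_one h.symm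
    exact ⟨1, one_pos, fun t _ => by rw [Subsingleton.elim (exp _) 0, norm_zero]; positivity⟩
  | succ n =>
    refine ⟨∑ k ∈ range (n + 1), ‖putzerProd a lam k‖ + 1, by positivity, fun t ht => ?_⟩
    rw [exp_neg_smul_eq_putzerSum a lam h]
    refine (norm_putzerSum_le a lam hlam ht).trans ?_
    gcongr
    linarith

theorem norm_exp_neg_smul_le_of_aeval_eq_zero {p : ℂ[X]} (hp : p ≠ 0) (hpa : aeval a p = 0)
    {α : ℝ} (hroots : ∀ μ ∈ p.roots, α ≤ μ.re) :
    ∃ C > 0, ∀ t : ℝ, 0 ≤ t →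
      ‖exp (-((t : ℂ) • a))‖ ≤ C * (1 + t ^ p.natDegree) * Real.exp (-(α * t)) := by
  have hcard : p.roots.card = p.natDegree := (IsAlgClosed.splits p).natDegree_eq_card_roots.symm
  set l := p.roots.toList
  have hlen : l.length = p.natDegree := by rw [Multiset.length_toList, hcard]
  refine norm_exp_neg_smul_le_of_putzerProd_eq_zero (lam := fun i => l.getD i 0) ?_ fun k hk => ?_
  · have hfactor : p ∣ (p.roots.map fun μ => X - C μ).prod := by
      conv_lhs => rw [← C_leadingCoeff_mul_prod_multiset_X_sub_C hcard]
      exact (isUnit_C.2 (leadingCoeff_ne_zero.2 hp).isUnit).mul_left_dvd.2 dvd_rfl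
    have hprod : ∏ i ∈ range p.natDegree, (C (l.getD i 0) - X) =
        (-1) ^ p.natDegree * (p.roots.map fun μ => X - C μ).prod := by
      simp_rw [← neg_sub X, prod_neg, card_range]
      congr 1
      rw [← hlen, List.prod_range_length_getD (fun μ => X - C μ), ← Multiset.prod_coe,
        ← Multiset.map_coe, Multiset.coe_toList]
    rw [putzerProd_eq_aeval, hprod]
    exact aeval_eq_zero_of_dvd_aeval_eq_zero (hfactor.mul_left _) hpa
  · rw [List.getD_eq_getElem _ _ (hlen ▸ hk)]
    exact hroots _ (Multiset.mem_toList.1 (List.getElem_mem _))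

end Putzer

namespace Matrix

variable {n : Type*} [Fintype n]

lemma map_ofReal_mulVec_re (M : Matrix n n ℝ) (v : n → ℂ) :
    (fun i => ((M.map Complex.ofReal *ᵥ v) i).re) = M *ᵥ fun i => (v i).re := by
  ext i
  simp [mulVec, dotProduct, Complex.re_sum]

lemma map_ofReal_mulVec_im (M : Matrix n n ℝ) (v : n → ℂ) :
    (fun i => ((M.map Complex.ofReal *ᵥ v) i).im) = M *ᵥ fun i => (v i).im := by
  ext i
  simp [mulVec, dotProduct, Complex.im_sum]

lemma map_ofReal_mulVec_eq_self {M Q : Matrix n n ℝ} (h : ∀ x, M *ᵥ x = 0 → Q *ᵥ x = x)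
    {v : n → ℂ} (hv : M.map Complex.ofReal *ᵥ v = 0) : Q.map Complex.ofReal *ᵥ v = v := by
  have hre := h _ (by rw [← map_ofReal_mulVec_re, hv]; rfl)
  have him := h _ (by rw [← map_ofReal_mulVec_im, hv]; rfl)
  funext i
  exact Complex.ext (congrFun ((map_ofReal_mulVec_re Q v).trans hre) i)
    (congrFun ((map_ofReal_mulVec_im Q v).trans him) i)

variable [DecidableEq n]

lemma mem_spectrum_iff_exists_mulVec_eq_smul {K : Type*} [Field K] {N : Matrix n n K} {μ : K} :
    μ ∈ spectrum K N ↔ ∃ v ≠ 0, N *ᵥ v = μ • v := by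
  rw [← spectrum_toLin', ← Module.End.hasEigenvalue_iff_mem_spectrum]
  refine ⟨fun h => ?_, fun ⟨v, hv, hNv⟩ => ?_⟩
  · obtain ⟨v, hv, hne⟩ := h.exists_hasEigenvector
    exact ⟨v, hne, by simpa using Module.End.mem_eigenspace_iff.1 hv⟩
  · exact Module.End.hasEigenvalue_of_hasEigenvector
      ⟨Module.End.mem_eigenspace_iff.2 (by simpa using hNv), hv⟩

lemma eq_or_mem_spectrum_of_mem_spectrum_add_smul {K : Type*} [Field K] {N Q : Matrix n n K}
    (hQ : IsIdempotentElem Q) (hQN : Q * N = 0) (hker : ∀ v, N *ᵥ v = 0 → Q *ᵥ v = v)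
    {c μ : K} (hμ : μ ∈ spectrum K (N + c • Q)) : μ = c ∨ μ ≠ 0 ∧ μ ∈ spectrum K N := by
  obtain ⟨v, hv, hNv⟩ := mem_spectrum_iff_exists_mulVec_eq_smul.1 hμ
  have hQv : c • Q *ᵥ v = μ • Q *ᵥ v := by
    have := congrArg (Q *ᵥ ·) hNv
    simpa only [add_mulVec, mulVec_add, mulVec_smul, smul_mulVec, mulVec_mulVec, hQN, hQ.eq,
      zero_mulVec, zero_add] using this
  by_cases hQv0 : Q *ᵥ v = 0
  · right
    have hNv' : N *ᵥ v = μ • v := by simpa [add_mulVec, smul_mulVec, hQv0] using hNv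
    refine ⟨fun hμ0 => hv ?_, mem_spectrum_iff_exists_mulVec_eq_smul.2 ⟨v, hv, hNv'⟩⟩
    rw [← hker v (by rw [hNv', hμ0, zero_smul]), hQv0]
  · exact .inl (smul_left_injective K hQv0 hQv).symm

lemma norm_map_ofReal (M : Matrix n n ℝ) : ‖M.map Complex.ofReal‖ = ‖M‖ := by
  simp [linfty_opNorm_def]

lemma exp_map_ofReal (M : Matrix n n ℝ) :
    (exp M).map Complex.ofReal = exp (M.map Complex.ofReal) :=
  map_exp Complex.ofRealHom.mapMatrix (continuous_id.matrix_map Complex.continuous_ofReal) M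

theorem norm_exp_neg_smul_le (M : Matrix n n ℝ) {α : ℝ}
    (hα : ∀ μ ∈ spectrum ℂ (M.map Complex.ofReal), α ≤ μ.re) :
    ∃ C > 0, ∀ t : ℝ, 0 ≤ t →
      ‖exp (-(t • M))‖ ≤ C * (1 + t ^ Fintype.card n) * Real.exp (-(α * t)) := by
  set N := M.map Complex.ofReal
  obtain ⟨C, hC, hbound⟩ := norm_exp_neg_smul_le_of_aeval_eq_zero (a := N)
    N.charpoly_monic.ne_zero (aeval_self_charpoly N)
    fun μ hμ => hα μ (mem_spectrum_of_isRoot_charpoly (isRoot_of_mem_roots hμ))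
  refine ⟨C, hC, fun t ht => ?_⟩
  have hmap : (-(t • M)).map Complex.ofReal = -((t : ℂ) • N) := by
    ext i j
    simp [N]
  rw [← norm_map_ofReal, exp_map_ofReal, hmap, ← charpoly_natDegree_eq_dim N]
  exact hbound t ht

end Matrix

lemma le_re_of_mem_spectrum_add_smul {n : Type*} [Fintype n] [DecidableEq n]
    {A P : Matrix n n ℝ} (hP1 : P * P = P) (hP3 : P * A = 0)
    (hP4 : ∀ x : n → ℝ, A *ᵥ x = 0 → P *ᵥ x = x) {β : ℝ}
    (hβ : ∀ μ ∈ spectrum ℂ (A.map Complex.ofReal), μ ≠ 0 → β ≤ μ.re)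
    {μ : ℂ} (hμ : μ ∈ spectrum ℂ ((A + β • P).map Complex.ofReal)) : β ≤ μ.re := by
  have hmap : (A + β • P).map Complex.ofReal =
      A.map Complex.ofReal + (β : ℂ) • P.map Complex.ofReal := by
    ext i j
    simp
  have hQ : IsIdempotentElem (P.map Complex.ofReal) := by
    change P.map Complex.ofRealHom * P.map Complex.ofRealHom = P.map Complex.ofRealHom
    rw [← Matrix.map_mul, hP1]
  have hQN : P.map Complex.ofReal * A.map Complex.ofReal = 0 := by
    change P.map Complex.ofRealHom * A.map Complex.ofRealHom = 0
    rw [← Matrix.map_mul, hP3, Matrix.map_zero _ (map_zero _)]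
  rw [hmap] at hμ
  rcases eq_or_mem_spectrum_of_mem_spectrum_add_smul hQ hQN
    (fun v => map_ofReal_mulVec_eq_self hP4) hμ with rfl | ⟨hμ0, hμA⟩
  · simp
  · exact hβ μ hμA hμ0

theorem xi_convergence_rate_general {d : ℕ} (A B P : Matrix (Fin d) (Fin d) ℝ)
    (hP1 : P * P = P) (hP2 : A * P = 0) (hP3 : P * A = 0)
    (hP4 : ∀ x : Fin d → ℝ, A *ᵥ x = 0 → P *ᵥ x = x)
    (α β : ℝ)
    (hα : IsLeast {r : ℝ | ∃ μ ∈ spectrum ℂ ((A + B).map Complex.ofReal), μ.re = r} α)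
    (hβ : A ≠ 0 →
      IsLeast {r : ℝ | ∃ μ ∈ spectrum ℂ (A.map Complex.ofReal), μ ≠ 0 ∧ μ.re = r} β) :
    ∃ c₁ > (0 : ℝ), ∃ c₂ > (0 : ℝ), ∃ n₁ n₂ : ℕ,
      ∀ x : Fin d → ℝ, ∀ t : ℝ, 0 ≤ t →
        ‖(NormedSpace.exp (-(t • A)) - NormedSpace.exp (-(t • (A + B)))) *ᵥ x - P *ᵥ x‖ ≤
          c₂ * (1 + t ^ n₂) * Real.exp (-(β * t)) * ‖x - P *ᵥ x‖ +
          c₁ * (1 + t ^ n₁) * Real.exp (-(α * t)) * ‖x‖ := by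
  have hβ' : ∀ μ ∈ spectrum ℂ (A.map Complex.ofReal), μ ≠ 0 → β ≤ μ.re := fun μ hμ hμ0 =>
    (hβ (by rintro rfl; simp [spectrum.mem_iff, (isUnit_iff_ne_zero.2 hμ0).map] at hμ)).2
      ⟨μ, hμ, hμ0, rfl⟩
  obtain ⟨c₁, hc₁, h₁⟩ := norm_exp_neg_smul_le (A + B) fun μ hμ => hα.2 ⟨μ, hμ, rfl⟩
  obtain ⟨c₂, hc₂, h₂⟩ := norm_exp_neg_smul_le (A + β • P) fun _ =>
    le_re_of_mem_spectrum_add_smul hP1 hP3 hP4 hβ'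
  rw [Fintype.card_fin] at h₁ h₂
  refine ⟨c₁, hc₁, c₂, hc₂, d, d, fun x t ht => ?_⟩
  have hproj : exp (-(t • (A + β • P))) * (1 - P) = exp (-(t • A)) - P := by
    rw [show -(t • (A + β • P)) = -(t • A) + (-(t * β)) • P by module]
    exact exp_add_smul_mul_one_sub hP1 (by simp [hP2]) (by simp [hP3]) _
  have hsplit : (exp (-(t • A)) - exp (-(t • (A + B)))) *ᵥ x - P *ᵥ x =
      exp (-(t • (A + β • P))) *ᵥ (x - P *ᵥ x) - exp (-(t • (A + B))) *ᵥ x := by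
    rw [show x - P *ᵥ x = (1 - P) *ᵥ x by rw [sub_mulVec, one_mulVec], mulVec_mulVec,
      hproj, sub_mulVec, sub_mulVec]
    abel
  calc _ ≤ ‖exp (-(t • (A + β • P))) *ᵥ (x - P *ᵥ x)‖ + ‖exp (-(t • (A + B))) *ᵥ x‖ := by
        rw [hsplit]; exact norm_sub_le _ _
    _ ≤ ‖exp (-(t • (A + β • P)))‖ * ‖x - P *ᵥ x‖ + ‖exp (-(t • (A + B)))‖ * ‖x‖ :=
        add_le_add (linfty_opNorm_mulVec _ _) (linfty_opNorm_mulVec _ _)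
    _ ≤ _ := by gcongr; exacts [h₂ t ht, h₁ t ht]

/-- Quantitative convergence of `ξ(t)x = (exp(-tA) - exp(-t(A+B)))x` to `Px`, where
`A` is almost-positively stable, `A+B` is positively stable, `P` is the projection onto
`ker A` along the generalized eigenspaces of nonzero eigenvalues, `α` is the minimal real
part of the eigenvalues of `A+B` and `β` the minimal real part of the nonzero eigenvalues
of `A` (with `β = 0` if `A = 0`). -/
theorem xi_convergence_rate {d : ℕ} (A B P : Matrix (Fin d) (Fin d) ℝ)
    (hspec : ∀ μ ∈ spectrum ℂ (A.map Complex.ofReal), μ = 0 ∨ 0 < μ.re)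
    (hkerstab : ∀ x : Fin d → ℝ, A *ᵥ (A *ᵥ x) = 0 → A *ᵥ x = 0)
    (hAB : ∀ μ ∈ spectrum ℂ ((A + B).map Complex.ofReal), 0 < μ.re)
    (hP1 : P * P = P) (hP2 : A * P = 0) (hP3 : P * A = 0)
    (hP4 : ∀ x : Fin d → ℝ, A *ᵥ x = 0 → P *ᵥ x = x)
    (α β : ℝ)
    (hα : IsLeast {r : ℝ | ∃ μ ∈ spectrum ℂ ((A + B).map Complex.ofReal), μ.re = r} α)
    (hβ₀ : A = 0 → β = 0)
    (hβ : A ≠ 0 →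
      IsLeast {r : ℝ | ∃ μ ∈ spectrum ℂ (A.map Complex.ofReal), μ ≠ 0 ∧ μ.re = r} β) :
    ∃ c₁ > (0 : ℝ), ∃ c₂ > (0 : ℝ), ∃ n₁ n₂ : ℕ,
      ∀ x : Fin d → ℝ, ∀ t : ℝ, 0 ≤ t →
        ‖(NormedSpace.exp (-(t • A)) - NormedSpace.exp (-(t • (A + B)))) *ᵥ x - P *ᵥ x‖ ≤
          c₂ * (1 + t ^ n₂) * Real.exp (-(β * t)) * ‖x - P *ᵥ x‖ +
          c₁ * (1 + t ^ n₁) * Real.exp (-(α * t)) * ‖x‖ :=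
  xi_convergence_rate_general A B P hP1 hP2 hP3 hP4 α β hα hβ
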